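/- arXiv:math/9903122 — 3 statements merged into one kernel-verified Lean document; each statement's English description precedes it below -/
import Mathlib

section
/- Let n ≥ 3 and let ū : (0,∞) → ℝ be a positive C² function satisfying ū''(r) + ((n-1)/r) ū'(r) + C₂ ū(r)^{(n+2)/(n-2)} ≥ 0 for all r ≥ R₀ (C₂ > 0), and suppose r^{(n-2)/2} ū(r) → 0 as r → ∞. Define v̄(s) = e^{s(n-2)/2} ū(e^s). Then v̄ satisfies v̄''(s) - ((n-2)/2)² v̄(s) + C₂ v̄(s)^{(n+2)/(n-2)} ≥ 0 for s ≥ ln R₀, and consequently v̄'' > 0 and v̄' < 0 for all sufficiently large s; in particular -r ū'(r) > ((n-2)/2) ū(r) for all large r. -/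
open Real Filter Set

/-- cylindrical transform of the spherical average.  If
`ū'' + ((n-1)/r) ū' + C₂ ū^{(n+2)/(n-2)} ≥ 0` for `r ≥ R₀` and `r^{(n-2)/2} ū(r) → 0`,
then `v̄(s) = e^{s(n-2)/2} ū(e^s)` satisfies
`v̄'' - ((n-2)/2)² v̄ + C₂ v̄^{(n+2)/(n-2)} ≥ 0` for `s ≥ ln R₀`; moreover `v̄'' > 0` and
`v̄' < 0` for large `s`, and `-r ū'(r) > ((n-2)/2) ū(r)` for large `r`. -/
theorem cylindrical_transform_monotonicity
    {n : ℕ} (hn : 3 ≤ n)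
    (u : ℝ → ℝ) (hu : ContDiffOn ℝ 2 u (Set.Ioi (0 : ℝ)))
    (hu_pos : ∀ r : ℝ, 0 < r → 0 < u r)
    (C₂ R₀ : ℝ) (hC₂ : 0 < C₂) (hR₀ : 0 < R₀)
    (hineq : ∀ r : ℝ, R₀ ≤ r →
      deriv (deriv u) r + (((n : ℝ) - 1) / r) * deriv u r
        + C₂ * (u r) ^ (((n : ℝ) + 2) / ((n : ℝ) - 2)) ≥ 0)
    (hdecay : Filter.Tendsto (fun r : ℝ => r ^ (((n : ℝ) - 2) / 2) * u r)
      Filter.atTop (nhds 0)) :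
    (∀ s : ℝ, Real.log R₀ ≤ s →
      deriv (deriv fun t : ℝ => Real.exp (t * ((n : ℝ) - 2) / 2) * u (Real.exp t)) s
          - (((n : ℝ) - 2) / 2) ^ 2
            * (Real.exp (s * ((n : ℝ) - 2) / 2) * u (Real.exp s))
          + C₂ * (Real.exp (s * ((n : ℝ) - 2) / 2) * u (Real.exp s))
              ^ (((n : ℝ) + 2) / ((n : ℝ) - 2)) ≥ 0) ∧
    (∃ s₁ : ℝ, ∀ s : ℝ, s₁ ≤ s →
      0 < deriv (deriv fun t : ℝ => Real.exp (t * ((n : ℝ) - 2) / 2) * u (Real.exp t)) s ∧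
      deriv (fun t : ℝ => Real.exp (t * ((n : ℝ) - 2) / 2) * u (Real.exp t)) s < 0) ∧
    (∃ r₁ : ℝ, 0 < r₁ ∧ ∀ r : ℝ, r₁ ≤ r →
      -(r * deriv u r) > (((n : ℝ) - 2) / 2) * u r) := by
  have h3 : (3 : ℝ) ≤ (n : ℝ) := by exact_mod_cast hn
  have hn2 : (0 : ℝ) < (n : ℝ) - 2 := by linarith
  set A : ℝ := ((n : ℝ) - 2) / 2 with hA
  set p : ℝ := ((n : ℝ) + 2) / ((n : ℝ) - 2) with hp
  have hApos : 0 < A := by rw [hA]; positivity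
  have hAp : A * p = A + 2 := by rw [hA, hp]; field_simp; ring
  have hq : 0 < p - 1 := by
    have : p - 1 = 4 / ((n : ℝ) - 2) := by rw [hp]; field_simp; norm_num
    rw [this]; positivity
  -- differentiability of u
  have hu1 : DifferentiableOn ℝ u (Set.Ioi (0 : ℝ)) := hu.differentiableOn (by norm_num)
  have hu' : ContDiffOn ℝ 1 (deriv u) (Set.Ioi (0 : ℝ)) :=
    hu.deriv_of_isOpen isOpen_Ioi (by norm_num)
  have huat : ∀ x : ℝ, 0 < x → HasDerivAt u (deriv u x) x := fun x hx =>
    (hu1.differentiableAt (isOpen_Ioi.mem_nhds hx)).hasDerivAt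
  have hu'at : ∀ x : ℝ, 0 < x → HasDerivAt (deriv u) (deriv (deriv u) x) x := fun x hx =>
    ((hu'.differentiableOn (by norm_num)).differentiableAt (isOpen_Ioi.mem_nhds hx)).hasDerivAt
  set v : ℝ → ℝ := fun t : ℝ => Real.exp (t * ((n : ℝ) - 2) / 2) * u (Real.exp t) with hv
  set V1 : ℝ → ℝ := fun t : ℝ => A * v t
      + Real.exp (t * ((n : ℝ) - 2) / 2) * Real.exp t * deriv u (Real.exp t) with hV1
  set W : ℝ → ℝ := fun t : ℝ => A * V1 t
      + (A + 1) * (Real.exp (t * ((n : ℝ) - 2) / 2) * Real.exp t) * deriv u (Real.exp t)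
      + Real.exp (t * ((n : ℝ) - 2) / 2) * Real.exp t * Real.exp t
        * deriv (deriv u) (Real.exp t) with hW
  have hvpos : ∀ s : ℝ, 0 < v s := fun s =>
    mul_pos (Real.exp_pos _) (hu_pos _ (Real.exp_pos _))
  -- derivative of the exponential factor
  have hE : ∀ t : ℝ, HasDerivAt (fun t : ℝ => Real.exp (t * ((n : ℝ) - 2) / 2))
      (A * Real.exp (t * ((n : ℝ) - 2) / 2)) t := by
    intro t
    have h1 : HasDerivAt (fun t : ℝ => t * ((n : ℝ) - 2) / 2) A t := by
      simpa [hA] using ((hasDerivAt_id t).mul_const ((n : ℝ) - 2)).div_const 2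
    simpa [mul_comm] using h1.exp
  have huexp : ∀ t : ℝ, HasDerivAt (fun t : ℝ => u (Real.exp t))
      (deriv u (Real.exp t) * Real.exp t) t := fun t =>
    (huat _ (Real.exp_pos t)).comp t (Real.hasDerivAt_exp t)
  have hu'exp : ∀ t : ℝ, HasDerivAt (fun t : ℝ => deriv u (Real.exp t))
      (deriv (deriv u) (Real.exp t) * Real.exp t) t := fun t =>
    (hu'at _ (Real.exp_pos t)).comp t (Real.hasDerivAt_exp t)
  have hvV1 : ∀ t : ℝ, HasDerivAt v (V1 t) t := by
    intro t
    have := (hE t).fun_mul (huexp t)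
    rw [hv, hV1]
    refine this.congr_deriv ?_
    simp only [hv]
    ring
  have hV1W : ∀ t : ℝ, HasDerivAt V1 (W t) t := by
    intro t
    have hg : HasDerivAt (fun t : ℝ => Real.exp (t * ((n : ℝ) - 2) / 2) * Real.exp t)
        ((A + 1) * (Real.exp (t * ((n : ℝ) - 2) / 2) * Real.exp t)) t := by
      have := (hE t).fun_mul (Real.hasDerivAt_exp t)
      refine this.congr_deriv ?_
      ring
    have h1 : HasDerivAt (fun t : ℝ => A * v t) (A * V1 t) t := (hvV1 t).const_mul A
    have h2 := hg.fun_mul (hu'exp t)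
    have := h1.fun_add h2
    rw [hV1, hW]
    refine this.congr_deriv ?_
    ring
  have hderiv_v : deriv v = V1 := funext fun t => (hvV1 t).deriv
  have hderiv2 : ∀ s : ℝ, deriv (deriv v) s = W s := fun s => by
    rw [hderiv_v]; exact (hV1W s).deriv
  -- the algebraic identity
  have key : ∀ s : ℝ, Real.exp (s * ((n : ℝ) - 2) / 2) ^ p
      = Real.exp (s * ((n : ℝ) - 2) / 2) * Real.exp s * Real.exp s := by
    intro s
    rw [← Real.exp_mul, ← Real.exp_add, ← Real.exp_add]
    congr 1
    have : s * ((n : ℝ) - 2) / 2 = s * A := by rw [hA]; ring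
    rw [this, mul_assoc, hAp]
    ring
  have hiden : ∀ s : ℝ, W s - A ^ 2 * v s + C₂ * v s ^ p
      = (Real.exp (s * ((n : ℝ) - 2) / 2) * Real.exp s * Real.exp s) *
        (deriv (deriv u) (Real.exp s) + (((n : ℝ) - 1) / Real.exp s) * deriv u (Real.exp s)
          + C₂ * u (Real.exp s) ^ p) := by
    intro s
    rw [hW, hV1, hv]
    simp only
    rw [Real.mul_rpow (Real.exp_pos _).le (hu_pos _ (Real.exp_pos _)).le, key s, hA]
    field_simp
    ring
  have part1 : ∀ s : ℝ, Real.log R₀ ≤ s →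
      deriv (deriv v) s - A ^ 2 * (Real.exp (s * ((n : ℝ) - 2) / 2) * u (Real.exp s))
        + C₂ * (Real.exp (s * ((n : ℝ) - 2) / 2) * u (Real.exp s)) ^ p ≥ 0 := by
    intro s hs
    have hr : R₀ ≤ Real.exp s := by
      calc R₀ = Real.exp (Real.log R₀) := (Real.exp_log hR₀).symm
        _ ≤ Real.exp s := Real.exp_le_exp.2 hs
    have h0 := hineq _ hr
    have hvs : Real.exp (s * ((n : ℝ) - 2) / 2) * u (Real.exp s) = v s := by rw [hv]
    rw [hvs, hderiv2 s, hiden s]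
    exact mul_nonneg (by positivity) h0
  -- v tends to 0
  have hveq : ∀ s : ℝ, v s = Real.exp s ^ A * u (Real.exp s) := by
    intro s
    rw [hv]
    simp only
    rw [← Real.exp_mul]
    congr 2
    rw [hA]; ring
  have hv0 : Tendsto v atTop (nhds 0) := by
    refine (hdecay.comp Real.tendsto_exp_atTop).congr fun s => ?_
    simp only [Function.comp_apply]
    rw [← hveq s]
  have htend2 : Tendsto (fun s => C₂ * v s ^ (p - 1)) atTop (nhds 0) := by
    have h1 := (hv0.rpow_const (Or.inr hq.le)).const_mul C₂
    simpa [Real.zero_rpow hq.ne'] using h1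
  obtain ⟨s₀, hs₀⟩ := Filter.eventually_atTop.1
    (htend2.eventually (gt_mem_nhds (by positivity : (0 : ℝ) < A ^ 2)))
  set s₁ : ℝ := max s₀ (Real.log R₀) with hs₁
  have hW_pos : ∀ s : ℝ, s₁ ≤ s → 0 < W s := by
    intro s hs
    have h1 := part1 s (le_trans (le_max_right _ _) hs)
    rw [hderiv2 s] at h1
    have hvs : Real.exp (s * ((n : ℝ) - 2) / 2) * u (Real.exp s) = v s := by rw [hv]
    rw [hvs] at h1
    have hsplit : v s ^ p = v s ^ (p - 1) * v s := by
      rw [← Real.rpow_add_one (hvpos s).ne', sub_add_cancel]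
    rw [hsplit] at h1
    have hsmall := hs₀ s (le_trans (le_max_left _ _) hs)
    nlinarith [hvpos s, mul_pos (hvpos s) (sub_pos.2 hsmall)]
  have hV1cont : Continuous V1 :=
    (Differentiable.continuous fun t => (hV1W t).differentiableAt)
  have hV1mono : StrictMonoOn V1 (Set.Ici s₁) := by
    refine strictMonoOn_of_deriv_pos (convex_Ici _) hV1cont.continuousOn fun x hx => ?_
    rw [(hV1W x).deriv]
    exact hW_pos x (le_of_lt (by simpa [interior_Ici] using hx))
  have hV1neg : ∀ s : ℝ, s₁ ≤ s → V1 s < 0 := by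
    intro s hs
    by_contra hcon
    push_neg at hcon
    have hvmono : StrictMonoOn v (Set.Ici s) := by
      refine strictMonoOn_of_deriv_pos (convex_Ici _)
        (Differentiable.continuous fun t => (hvV1 t).differentiableAt).continuousOn
        fun x hx => ?_
      rw [(hvV1 x).deriv]
      have hx' : s < x := by simpa [interior_Ici] using hx
      have : V1 s < V1 x := hV1mono (by exact hs) (by exact hs.trans hx'.le) hx'
      linarith
    have hmon : ∀ t : ℝ, s + 1 ≤ t → v (s + 1) ≤ v t := by
      intro t ht
      exact hvmono.monotoneOn (by simp : s + 1 ∈ Set.Ici s)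
        (by simp only [Set.mem_Ici]; linarith) ht
    have hle : v (s + 1) ≤ 0 :=
      ge_of_tendsto hv0 (Filter.eventually_atTop.2 ⟨s + 1, hmon⟩)
    exact absurd hle (not_le.2 (hvpos (s + 1)))
  refine ⟨part1, ⟨s₁, fun s hs => ?_⟩, ⟨Real.exp s₁, Real.exp_pos _, fun r hr => ?_⟩⟩
  · constructor
    · rw [hderiv2 s]; exact hW_pos s hs
    · rw [hderiv_v]; exact hV1neg s hs
  · have hr0 : 0 < r := lt_of_lt_of_le (Real.exp_pos _) hr
    have hs : s₁ ≤ Real.log r := (Real.le_log_iff_exp_le hr0).2 hr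
    have hV := hV1neg (Real.log r) hs
    rw [hV1, hv] at hV
    simp only [Real.exp_log hr0] at hV
    have hb : 0 < Real.exp (Real.log r * ((n : ℝ) - 2) / 2) := Real.exp_pos _
    have h4 : A * u r + r * deriv u r < 0 := by
      by_contra hc
      push_neg at hc
      nlinarith [mul_nonneg hb.le hc]
    linarith
end

section
/- Let ω : (0,∞) → ℝ be positive and C², nondecreasing on [r₀,∞), and satisfy ω''(r) ≤ -c ω(r)/r² for all r ≥ r₀ (c > 0). Suppose moreover liminf_{r→∞} ω'(r) = 0 along some sequence. Then ω'(r) ≥ c ω(r)/r for all r ≥ r₀. -/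
/-- a nondecreasing positive function with `ω'' ≤ -c ω / r²` and
`liminf ω' = 0` along a sequence satisfies `ω' ≥ c ω / r`. -/
theorem deriv_lower_bound_of_concavity
    (ω : ℝ → ℝ) (hω : ContDiffOn ℝ 2 ω (Set.Ioi (0 : ℝ)))
    (hω_pos : ∀ r : ℝ, 0 < r → 0 < ω r)
    (c r₀ : ℝ) (hc : 0 < c) (hr₀ : 0 < r₀)
    (hmono : ∀ r : ℝ, r₀ ≤ r → 0 ≤ deriv ω r)
    (hconc : ∀ r : ℝ, r₀ ≤ r → deriv (deriv ω) r ≤ -(c * ω r / r ^ 2))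
    (R : ℕ → ℝ) (hRtend : Filter.Tendsto R Filter.atTop Filter.atTop)
    (hR : Filter.Tendsto (fun j => deriv ω (R j)) Filter.atTop (nhds 0)) :
    ∀ r : ℝ, r₀ ≤ r → deriv ω r ≥ c * ω r / r := by
  intro r hr
  have hr0 : (0:ℝ) < r := lt_of_lt_of_le hr₀ hr
  have hopen : IsOpen (Set.Ioi (0:ℝ)) := isOpen_Ioi
  -- deriv ω is C¹ on Ioi 0
  have hd1 : ContDiffOn ℝ 1 (deriv ω) (Set.Ioi (0:ℝ)) :=
    hω.deriv_of_isOpen hopen (by norm_num)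
  have hdiff1 : DifferentiableOn ℝ (deriv ω) (Set.Ioi (0:ℝ)) :=
    hd1.differentiableOn one_ne_zero
  have hcont2 : ContinuousOn (deriv (deriv ω)) (Set.Ioi (0:ℝ)) :=
    hd1.continuousOn_deriv_of_isOpen hopen le_rfl
  -- ω is monotone on Ici r₀
  have hcontω : ContinuousOn ω (Set.Ici r₀) :=
    hω.continuousOn.mono (fun x hx => lt_of_lt_of_le hr₀ hx)
  have hmonoOn : MonotoneOn ω (Set.Ici r₀) := by
    apply monotoneOn_of_deriv_nonneg (convex_Ici r₀) hcontω
    · intro x hx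
      rw [interior_Ici] at hx
      exact ((hω.differentiableOn (by norm_num) x (lt_trans hr₀ hx)).differentiableAt
        (hopen.mem_nhds (lt_trans hr₀ hx))).differentiableWithinAt
    · intro x hx
      rw [interior_Ici] at hx
      exact hmono x hx.le
  set A : ℝ := c * ω r with hA
  have hApos : 0 < A := mul_pos hc (hω_pos r hr0)
  -- key inequality for s ≥ r
  have key : ∀ s : ℝ, r ≤ s → deriv ω s ≤ deriv ω r + A * s⁻¹ - A * r⁻¹ := by
    intro s hs
    have hsub : Set.uIcc r s ⊆ Set.Ioi (0:ℝ) := by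
      rw [Set.uIcc_of_le hs]
      exact fun x hx => lt_of_lt_of_le hr0 hx.1
    have hFTC : ∫ t in r..s, deriv (deriv ω) t = deriv ω s - deriv ω r := by
      apply intervalIntegral.integral_eq_sub_of_hasDerivAt
      · intro t ht
        exact (hdiff1.differentiableAt (hopen.mem_nhds (hsub ht))).hasDerivAt
      · exact (hcont2.mono hsub).intervalIntegrable
    have hint1 : IntervalIntegrable (deriv (deriv ω)) MeasureTheory.volume r s :=
      (hcont2.mono hsub).intervalIntegrable
    have hint2 : IntervalIntegrable (fun t : ℝ => -A * t ^ (-2 : ℤ))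
        MeasureTheory.volume r s := by
      apply ContinuousOn.intervalIntegrable
      apply ContinuousOn.mul continuousOn_const
      intro x hx
      exact (continuousAt_zpow₀ x (-2) (Or.inl (ne_of_gt (hsub hx)))).continuousWithinAt
    have hmono_int : ∫ t in r..s, deriv (deriv ω) t
        ≤ ∫ t in r..s, -A * t ^ (-2 : ℤ) := by
      apply intervalIntegral.integral_mono_on hs hint1 hint2
      intro t ht
      have ht0 : 0 < t := lt_of_lt_of_le hr0 ht.1
      have htr₀ : r₀ ≤ t := le_trans hr ht.1
      have h1 : deriv (deriv ω) t ≤ -(c * ω t / t ^ 2) := hconc t htr₀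
      have h2 : ω r ≤ ω t := hmonoOn hr htr₀ ht.1
      have : -A * t ^ (-2 : ℤ) = -(c * ω r / t ^ 2) := by
        field_simp [hA]
        rw [hA]
      rw [this]
      refine le_trans h1 (neg_le_neg ?_)
      exact div_le_div_of_nonneg_right (mul_le_mul_of_nonneg_left h2 hc.le) (by positivity)
        |>.trans_eq rfl
    have hval : ∫ t in r..s, -A * t ^ (-2 : ℤ) = A * s⁻¹ - A * r⁻¹ := by
      rw [intervalIntegral.integral_const_mul, integral_zpow]
      · push_cast
        have hrne : r ≠ 0 := ne_of_gt hr0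
        have hsne : s ≠ 0 := ne_of_gt (lt_of_lt_of_le hr0 hs)
        rw [zpow_neg_one, zpow_neg_one]
        field_simp
        ring
      · right
        constructor
        · decide
        · intro hmem
          exact absurd (hsub hmem) (by simp)
    linarith [hFTC ▸ hmono_int, hval ▸ (hFTC ▸ hmono_int)]
  -- take the limit along R j
  have hev : ∀ᶠ j in Filter.atTop, deriv ω (R j) ≤ deriv ω r + A * (R j)⁻¹ - A * r⁻¹ := by
    filter_upwards [hRtend.eventually_ge_atTop r] with j hj
    exact key (R j) hj
  have hlim : Filter.Tendsto (fun j => deriv ω r + A * (R j)⁻¹ - A * r⁻¹)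
      Filter.atTop (nhds (deriv ω r + A * 0 - A * r⁻¹)) := by
    exact (tendsto_const_nhds.add (tendsto_const_nhds.mul hRtend.inv_tendsto_atTop)).sub
      tendsto_const_nhds
  have hfinal : (0:ℝ) ≤ deriv ω r + A * 0 - A * r⁻¹ :=
    le_of_tendsto_of_tendsto hR hlim hev
  have : A * r⁻¹ = c * ω r / r := by rw [hA, div_eq_mul_inv]
  linarith [this ▸ hfinal]
end

section
/- Let v̄ : ℝ → ℝ be C² and positive, s_j a point with v̄'(s_j) = 0, and suppose 0 ≤ v̄''(s) ≤ (1/2)((n-2)/2)² v̄(s) holds for all s in an interval [s_j, s_j + S] (n ≥ 3, S > 0). Then v̄(s)/v̄(s_j) ≤ exp((1/4)((n-2)/2)² (s - s_j)²) for all s ∈ [s_j, s_j + S]. -/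
/-- a Grönwall-type Gaussian bound near a critical point from
`0 ≤ v̄'' ≤ (1/2)((n-2)/2)² v̄`. -/
theorem gaussian_growth_bound
    {n : ℕ} (hn : 3 ≤ n)
    (v : ℝ → ℝ) (hv : ContDiff ℝ 2 v) (hv_pos : ∀ s, 0 < v s)
    (sj S : ℝ) (hS : 0 < S) (hcrit : deriv v sj = 0)
    (hpinch : ∀ s : ℝ, s ∈ Set.Icc sj (sj + S) →
      0 ≤ deriv (deriv v) s ∧
      deriv (deriv v) s ≤ (1 / 2) * (((n : ℝ) - 2) / 2) ^ 2 * v s) :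
    ∀ s : ℝ, s ∈ Set.Icc sj (sj + S) →
      v s / v sj ≤ Real.exp ((1 / 4) * (((n : ℝ) - 2) / 2) ^ 2 * (s - sj) ^ 2) := by
  set c : ℝ := (1 / 2) * (((n : ℝ) - 2) / 2) ^ 2 with hc_def
  have hc : 0 ≤ c := by positivity
  have hd1 : Differentiable ℝ v := hv.differentiable two_ne_zero
  have hv2 : ContDiff ℝ ((1 : ℕ) + 1) v := by exact_mod_cast hv
  have hd2 : Differentiable ℝ (deriv v) :=
    ((contDiff_succ_iff_deriv.mp hv2).2.2).differentiable (by norm_num)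
  have hsj_mem : sj ∈ Set.Icc sj (sj + S) := ⟨le_rfl, by linarith⟩
  have hIoo_sub : Set.Ioo sj (sj + S) ⊆ Set.Icc sj (sj + S) := Set.Ioo_subset_Icc_self
  -- deriv v is monotone on the interval
  have hmono : MonotoneOn (deriv v) (Set.Icc sj (sj + S)) := by
    apply monotoneOn_of_deriv_nonneg (convex_Icc _ _) hd2.continuous.continuousOn
      (hd2.differentiableOn.mono interior_subset)
    intro x hx
    rw [interior_Icc] at hx
    exact (hpinch x (hIoo_sub hx)).1
  have hderiv_nonneg : ∀ s ∈ Set.Icc sj (sj + S), 0 ≤ deriv v s := by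
    intro s hs
    have := hmono hsj_mem hs hs.1
    rwa [hcrit] at this
  -- auxiliary function h
  set h : ℝ → ℝ := fun s => deriv v s - c * (s - sj) * v s with hh_def
  have hh_deriv : ∀ s, HasDerivAt h
      (deriv (deriv v) s - (c * v s + c * (s - sj) * deriv v s)) s := by
    intro s
    have h1 : HasDerivAt (fun s : ℝ => c * (s - sj)) c s := by
      simpa using (((hasDerivAt_id s).sub_const sj).const_mul c)
    have h2 : HasDerivAt (fun s : ℝ => c * (s - sj) * v s)
        (c * v s + c * (s - sj) * deriv v s) s := h1.mul (hd1 s).hasDerivAt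
    exact ((hd2 s).hasDerivAt).sub h2
  have hh_diff : Differentiable ℝ h := fun s => (hh_deriv s).differentiableAt
  have hanti : AntitoneOn h (Set.Icc sj (sj + S)) := by
    apply antitoneOn_of_deriv_nonpos (convex_Icc _ _) hh_diff.continuous.continuousOn
      (hh_diff.differentiableOn.mono interior_subset)
    intro x hx
    rw [interior_Icc] at hx
    rw [(hh_deriv x).deriv]
    have hx' := hIoo_sub hx
    have h1 := (hpinch x hx').2
    have h2 : 0 ≤ c * (x - sj) * deriv v x := by
      have := hderiv_nonneg x hx'
      have hxs : 0 ≤ x - sj := by linarith [hx.1]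
      positivity
    linarith
  have hh_le : ∀ s ∈ Set.Icc sj (sj + S), h s ≤ 0 := by
    intro s hs
    have := hanti hsj_mem hs hs.1
    simpa [hh_def, hcrit] using this
  -- auxiliary function g = log v - c/2 (s-sj)^2
  set g : ℝ → ℝ := fun s => Real.log (v s) - c / 2 * (s - sj) ^ 2 with hg_def
  have hg_deriv : ∀ s, HasDerivAt g (deriv v s / v s - c * (s - sj)) s := by
    intro s
    have h1 : HasDerivAt (fun s => Real.log (v s)) (deriv v s / v s) s := by
      exact (hd1 s).hasDerivAt.log (hv_pos s).ne'
    have h2 : HasDerivAt (fun s : ℝ => c / 2 * (s - sj) ^ 2) (c * (s - sj)) s := by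
      have : HasDerivAt (fun s : ℝ => (s - sj) ^ 2) (2 * (s - sj)) s := by
        simpa using (((hasDerivAt_id s).sub_const sj).fun_pow 2)
      have := this.const_mul (c / 2)
      exact this.congr_deriv (by ring)
    exact h1.sub h2
  have hg_diff : Differentiable ℝ g := fun s => (hg_deriv s).differentiableAt
  have hganti : AntitoneOn g (Set.Icc sj (sj + S)) := by
    apply antitoneOn_of_deriv_nonpos (convex_Icc _ _) hg_diff.continuous.continuousOn
      (hg_diff.differentiableOn.mono interior_subset)
    intro x hx
    rw [interior_Icc] at hx
    rw [(hg_deriv x).deriv]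
    have hx' := hIoo_sub hx
    have hle := hh_le x hx'
    have hvx := hv_pos x
    rw [sub_nonpos, div_le_iff₀ hvx]
    simp only [hh_def] at hle
    nlinarith
  intro s hs
  have hgle := hganti hsj_mem hs hs.1
  simp only [hg_def, sub_self] at hgle
  have hlog : Real.log (v s) - Real.log (v sj) ≤ c / 2 * (s - sj) ^ 2 := by
    simp at hgle; linarith
  have hrw : Real.log (v s / v sj) ≤ c / 2 * (s - sj) ^ 2 := by
    rw [Real.log_div (hv_pos s).ne' (hv_pos sj).ne']; exact hlog
  have := Real.exp_le_exp.mpr hrw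
  rw [Real.exp_log (div_pos (hv_pos s) (hv_pos sj))] at this
  calc v s / v sj ≤ Real.exp (c / 2 * (s - sj) ^ 2) := this
    _ = Real.exp ((1 / 4) * (((n : ℝ) - 2) / 2) ^ 2 * (s - sj) ^ 2) := by
        rw [hc_def]; ring_nf
end
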